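/- Let B be a skew left brace. The socle Soc(B) is a normal subgroup of (B,·). -/

import Mathlib

/-!
The map `a ↦ λ_a` is a homomorphism from `(B, ·)` to the automorphisms of `(B, ⋆)`, and
`a · b = a ⋆ λ_a(b)`. So on elements with `λ_x = id` the two products agree, `x · y = x ⋆ y` and
`x⁻¹ = x^⋆`, which makes the socle closed under `·` and inverses. For conjugation,
`b · y · b⁻¹ = b ⋆ λ_b(y) ⋆ b^⋆`, and this is `λ_b(y)` because `λ_b`, being a `⋆`-automorphism,
maps `⋆`-central elements to `⋆`-central elements.
-/


/-- A skew left brace: a set `B` with two group operations `star` and `mul`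
(with their own identities and inverses) satisfying
`a · (b ⋆ c) = (a · b) ⋆ a^⋆ ⋆ (a · c)`. -/
structure SkewLeftBrace (B : Type*) where
  star : B → B → B
  mul : B → B → B
  oneS : B
  oneM : B
  sinv : B → B
  minv : B → B
  star_assoc : ∀ a b c, star (star a b) c = star a (star b c)
  oneS_star : ∀ a, star oneS a = a
  star_oneS : ∀ a, star a oneS = a
  sinv_star : ∀ a, star (sinv a) a = oneS
  star_sinv : ∀ a, star a (sinv a) = oneS
  mul_assoc : ∀ a b c, mul (mul a b) c = mul a (mul b c)
  oneM_mul : ∀ a, mul oneM a = a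
  mul_oneM : ∀ a, mul a oneM = a
  minv_mul : ∀ a, mul (minv a) a = oneM
  mul_minv : ∀ a, mul a (minv a) = oneM
  compat : ∀ a b c, mul a (star b c) = star (mul a b) (star (sinv a) (mul a c))

/-- The lambda map `λ_a(b) = a^⋆ ⋆ (a · b)`. -/
def lam {B : Type*} (S : SkewLeftBrace B) (a b : B) : B :=
  S.star (S.sinv a) (S.mul a b)

/-- The gamma map `γ_b(a) = ((b⁻¹ · a⁻¹) ⋆ (b⁻¹)^⋆)⁻¹`. -/
def gam {B : Type*} (S : SkewLeftBrace B) (b a : B) : B :=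
  S.minv (S.star (S.mul (S.minv b) (S.minv a)) (S.sinv (S.minv b)))

/-- The socle: elements `b` with `λ_b = id` and `a ⋆ b ⋆ a^⋆ = b` for all `a`. -/
def Soc {B : Type*} (S : SkewLeftBrace B) : Set B :=
  {b | (∀ c, lam S b c = c) ∧ ∀ a, S.star (S.star a b) (S.sinv a) = b}

def StarCentral {B : Type*} (S : SkewLeftBrace B) (y : B) : Prop :=
  ∀ a, S.star (S.star a y) (S.sinv a) = y

namespace SkewLeftBrace

variable {B : Type*} (S : SkewLeftBrace B)

section StarGroup

lemma star_left_cancel {x y z : B} (h : S.star x y = S.star x z) : y = z := by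
  have h' := congrArg (S.star (S.sinv x)) h
  rwa [← S.star_assoc, ← S.star_assoc, S.sinv_star, S.oneS_star, S.oneS_star] at h'

lemma sinv_star_cancel_left (a z : B) : S.star (S.sinv a) (S.star a z) = z := by
  rw [← S.star_assoc, S.sinv_star, S.oneS_star]

lemma star_sinv_cancel_left (a z : B) : S.star a (S.star (S.sinv a) z) = z := by
  rw [← S.star_assoc, S.star_sinv, S.oneS_star]

lemma eq_sinv_of_star_eq_oneS {x y : B} (h : S.star x y = S.oneS) : y = S.sinv x :=
  S.star_left_cancel (by rw [h, S.star_sinv])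

lemma sinv_sinv (x : B) : S.sinv (S.sinv x) = x :=
  (S.eq_sinv_of_star_eq_oneS (S.sinv_star x)).symm

lemma sinv_star_rev (x y : B) : S.sinv (S.star x y) = S.star (S.sinv y) (S.sinv x) :=
  (S.eq_sinv_of_star_eq_oneS (by
    rw [S.star_assoc, ← S.star_assoc y, S.star_sinv, S.oneS_star, S.star_sinv])).symm

lemma sinv_oneS : S.sinv S.oneS = S.oneS :=
  (S.eq_sinv_of_star_eq_oneS (S.oneS_star S.oneS)).symm

end StarGroup

lemma mul_oneS (a : B) : S.mul a S.oneS = a := by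
  have h : S.star (S.mul a S.oneS) S.oneS
      = S.star (S.mul a S.oneS) (S.star (S.sinv a) (S.mul a S.oneS)) := by
    rw [S.star_oneS, ← S.compat, S.oneS_star]
  rw [S.eq_sinv_of_star_eq_oneS (S.star_left_cancel h).symm, S.sinv_sinv]

lemma oneS_eq_oneM : S.oneS = S.oneM := by
  simpa only [S.oneM_mul] using S.mul_oneS S.oneM

section Lambda

lemma mul_eq_star_lam (a b : B) : S.mul a b = S.star a (lam S a b) :=
  (S.star_sinv_cancel_left a _).symm

lemma lam_star (a b c : B) : lam S a (S.star b c) = S.star (lam S a b) (lam S a c) := by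
  rw [lam, lam, lam, S.compat, ← S.star_assoc]

lemma lam_oneS (a : B) : lam S a S.oneS = S.oneS := by
  rw [lam, S.mul_oneS, S.sinv_star]

lemma lam_sinv (a b : B) : lam S a (S.sinv b) = S.sinv (lam S a b) :=
  S.eq_sinv_of_star_eq_oneS (by rw [← S.lam_star, S.star_sinv, S.lam_oneS])

lemma lam_oneM (c : B) : lam S S.oneM c = c := by
  rw [lam, S.oneM_mul, ← S.oneS_eq_oneM, S.sinv_oneS, S.oneS_star]

lemma lam_mul (a b c : B) : lam S (S.mul a b) c = lam S a (lam S b c) := by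
  -- this is `λ_a(b^⋆) = λ_a(b)^⋆`
  have key : S.star (S.sinv a) (S.mul a (S.sinv b)) = S.star (S.sinv (S.mul a b)) a := by
    have h := S.lam_sinv a b
    rw [lam, lam] at h
    rw [h, S.sinv_star_rev, S.sinv_sinv]
  rw [lam, lam, lam, S.compat, ← S.star_assoc, key, S.star_assoc, S.star_sinv_cancel_left,
    ← S.mul_assoc]

lemma lam_lam_minv (a c : B) : lam S a (lam S (S.minv a) c) = c := by
  rw [← S.lam_mul, S.mul_minv, S.lam_oneM]

lemma lam_minv_eq_self {a : B} (ha : ∀ c, lam S a c = c) (c : B) : lam S (S.minv a) c = c := by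
  simpa only [ha] using S.lam_lam_minv a c

end Lambda

section StarCentral

variable {S}

lemma StarCentral.star {x y : B} (hx : StarCentral S x) (hy : StarCentral S y) :
    StarCentral S (S.star x y) := by
  intro a
  conv_rhs => rw [← hx a, ← hy a]
  simp only [S.star_assoc, S.sinv_star_cancel_left]

lemma StarCentral.sinv {x : B} (hx : StarCentral S x) : StarCentral S (S.sinv x) := by
  intro a
  simpa only [S.sinv_star_rev, S.sinv_sinv, S.star_assoc] using congrArg S.sinv (hx a)

lemma StarCentral.lam {y : B} (hy : StarCentral S y) (b : B) : StarCentral S (lam S b y) := by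
  intro a
  conv_lhs => rw [← S.lam_lam_minv b a]
  rw [← S.lam_sinv, ← S.lam_star, ← S.lam_star, hy]

end StarCentral

section Socle

lemma mul_eq_star_of_lam_eq_self {x : B} (hx : ∀ c, lam S x c = c) (y : B) :
    S.mul x y = S.star x y := by
  rw [S.mul_eq_star_lam, hx]

lemma minv_eq_sinv_of_lam_eq_self {x : B} (hx : ∀ c, lam S x c = c) : S.minv x = S.sinv x :=
  S.eq_sinv_of_star_eq_oneS (by
    rw [← S.mul_eq_star_of_lam_eq_self hx, S.mul_minv, S.oneS_eq_oneM])

lemma mul_mul_minv_of_lam_eq_self (b : B) {y : B} (hy : ∀ c, lam S y c = c) :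
    S.mul (S.mul b y) (S.minv b) = S.star (S.star b (lam S b y)) (S.sinv b) := by
  rw [S.mul_assoc, S.mul_eq_star_of_lam_eq_self hy, S.compat, S.mul_minv, ← S.oneS_eq_oneM,
    S.star_oneS, S.mul_eq_star_lam, S.star_assoc]

lemma oneM_mem_Soc : S.oneM ∈ Soc S :=
  ⟨S.lam_oneM, fun a => by rw [← S.oneS_eq_oneM, S.star_oneS, S.star_sinv]⟩

lemma mul_mem_Soc {x y : B} (hx : x ∈ Soc S) (hy : y ∈ Soc S) : S.mul x y ∈ Soc S := by
  refine ⟨fun c => by rw [S.lam_mul, hy.1, hx.1], ?_⟩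
  rw [S.mul_eq_star_of_lam_eq_self hx.1]
  exact StarCentral.star hx.2 hy.2

lemma minv_mem_Soc {x : B} (hx : x ∈ Soc S) : S.minv x ∈ Soc S := by
  refine ⟨S.lam_minv_eq_self hx.1, ?_⟩
  rw [S.minv_eq_sinv_of_lam_eq_self hx.1]
  exact StarCentral.sinv hx.2

lemma mul_mul_minv_mem_Soc (b : B) {y : B} (hy : y ∈ Soc S) :
    S.mul (S.mul b y) (S.minv b) ∈ Soc S := by
  refine ⟨fun c => ?_, ?_⟩
  · rw [S.lam_mul, S.lam_mul, hy.1, S.lam_lam_minv]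
  · rw [S.mul_mul_minv_of_lam_eq_self b hy.1, StarCentral.lam hy.2 b b]
    exact StarCentral.lam hy.2 b

end Socle

end SkewLeftBrace

theorem stmt_12 {B : Type*} (S : SkewLeftBrace B) :
    S.oneM ∈ Soc S ∧
      (∀ x y, x ∈ Soc S → y ∈ Soc S → S.mul x y ∈ Soc S) ∧
      (∀ x, x ∈ Soc S → S.minv x ∈ Soc S) ∧
      (∀ b y, y ∈ Soc S → S.mul (S.mul b y) (S.minv b) ∈ Soc S) :=
  ⟨S.oneM_mem_Soc, fun _ _ => S.mul_mem_Soc, fun _ => S.minv_mem_Soc,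
    fun b _ => S.mul_mul_minv_mem_Soc b⟩
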